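/- arXiv:math/0401389 — 2 statements merged into one kernel-verified Lean document; each statement's English description precedes it below -/
import Mathlib

section
/- There exists a function L : [0,1] → [0,1] with L(1) = 0 such that L(s) = lim_{n → ∞} β_n(s) for all s ∈ [0,1], and L satisfies the non-linear integral equation L(s) = ∫_s^1 (1/w)(1 − e^{−L(1−w)}) dw for all s ∈ [0,1). -/
open MeasureTheory Real Set Filter

/-- The recursively defined sequence of functions `β_n`:
`β₀(s) = 1 - s` and `β_n(s) = ∫_s^1 (1/w)(1 - e^{-β_{n-1}(1-w)}) dw`. -/
noncomputable def beta : ℕ → ℝ → ℝ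
  | 0, s => 1 - s
  | n + 1, s => ∫ w in Set.Ioc s 1, (1 / w) * (1 - Real.exp (-(beta n (1 - w))))

/-!
With `betaStep f s = ∫_s^1 (1/w)(1 - e^{-f(1-w)}) dw` we have `β_{n+1} = betaStep β_n`. Since
`0 ≤ 1 - e^{-x} ≤ x`, `betaStep` preserves the functions with `0 ≤ f(t) ≤ 1 - t` on `[0,1]`, and
for those the integrand lies in `[0,1]`. As `x ↦ 1 - e^{-x}` is increasing, `betaStep` is
monotone, so `β₁ ≤ β₀` propagates to `β_{n+1} ≤ β_n`: the sequence decreases to its infimum `L`,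
and dominated convergence (with bound `1`) gives `L = betaStep L`.
-/

theorem measurable_setIntegral_Ioc {f : ℝ → ℝ} (hf : Measurable f) (b : ℝ) :
    Measurable fun s => ∫ w in Ioc s b, f w := by
  have hS : MeasurableSet {p : ℝ × ℝ | p.1 < p.2 ∧ p.2 ≤ b} :=
    (measurableSet_lt measurable_fst measurable_snd).inter (measurableSet_le measurable_snd
      measurable_const)
  have hF : StronglyMeasurable ({p : ℝ × ℝ | p.1 < p.2 ∧ p.2 ≤ b}.indicator (f ∘ Prod.snd)) :=
    ((hf.comp measurable_snd).indicator hS).stronglyMeasurable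
  simp_rw [← integral_indicator measurableSet_Ioc]
  exact hF.integral_prod_right'.measurable

lemma one_div_mul_one_sub_exp_neg_mem_Icc {x w : ℝ} (hw : 0 < w) (hx₀ : 0 ≤ x) (hxw : x ≤ w) :
    1 / w * (1 - exp (-x)) ∈ Icc 0 1 := by
  have hlow : 0 ≤ 1 - exp (-x) := sub_nonneg.2 (exp_le_one_iff.2 (neg_nonpos.2 hx₀))
  have hup : 1 - exp (-x) ≤ w := by linarith [add_one_le_exp (-x)]
  refine ⟨by positivity, ?_⟩
  calc 1 / w * (1 - exp (-x)) ≤ 1 / w * w := by gcongr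
    _ = 1 := one_div_mul_cancel hw.ne'

noncomputable def betaStep (f : ℝ → ℝ) (s : ℝ) : ℝ :=
  ∫ w in Ioc s 1, (1 / w) * (1 - exp (-(f (1 - w))))

section betaStep

variable {f g : ℝ → ℝ} {s : ℝ}

lemma betaIntegrand_mem_Icc (hf : ∀ t ∈ Icc (0:ℝ) 1, f t ∈ Icc 0 (1 - t)) {w : ℝ}
    (hw : w ∈ Ioc (0:ℝ) 1) : (1 / w) * (1 - exp (-(f (1 - w)))) ∈ Icc 0 1 := by
  have h := hf (1 - w) ⟨by linarith [hw.2], by linarith [hw.1]⟩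
  exact one_div_mul_one_sub_exp_neg_mem_Icc hw.1 h.1 (by linarith [h.2])

lemma norm_betaIntegrand_le_one (hf : ∀ t ∈ Icc (0:ℝ) 1, f t ∈ Icc 0 (1 - t)) {w : ℝ}
    (hw : w ∈ Ioc (0:ℝ) 1) : ‖(1 / w) * (1 - exp (-(f (1 - w))))‖ ≤ 1 := by
  obtain ⟨h₀, h₁⟩ := betaIntegrand_mem_Icc hf hw
  rwa [Real.norm_of_nonneg h₀]

lemma betaStep_mem_Icc (hf : ∀ t ∈ Icc (0:ℝ) 1, f t ∈ Icc 0 (1 - t)) (hs : s ∈ Icc (0:ℝ) 1) :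
    betaStep f s ∈ Icc 0 (1 - s) := by
  have hsub : Ioc s 1 ⊆ Ioc 0 1 := Ioc_subset_Ioc_left hs.1
  refine ⟨setIntegral_nonneg measurableSet_Ioc fun w hw => (betaIntegrand_mem_Icc hf (hsub hw)).1,
    ?_⟩
  calc betaStep f s ≤ ‖betaStep f s‖ := le_norm_self _
    _ ≤ 1 * volume.real (Ioc s 1) := norm_setIntegral_le_of_norm_le_const measure_Ioc_lt_top
        fun w hw => norm_betaIntegrand_le_one hf (hsub hw)
    _ = 1 - s := by rw [one_mul, Real.volume_real_Ioc_of_le hs.2]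

lemma measurable_betaIntegrand (hf : Measurable f) :
    Measurable fun w : ℝ => (1 / w) * (1 - exp (-(f (1 - w)))) := by
  fun_prop

lemma measurable_betaStep (hf : Measurable f) : Measurable (betaStep f) :=
  measurable_setIntegral_Ioc (measurable_betaIntegrand hf) 1

lemma integrableOn_betaIntegrand (hfm : Measurable f)
    (hf : ∀ t ∈ Icc (0:ℝ) 1, f t ∈ Icc 0 (1 - t)) (hs : 0 ≤ s) :
    IntegrableOn (fun w => (1 / w) * (1 - exp (-(f (1 - w))))) (Ioc s 1) := by
  refine .of_bound measure_Ioc_lt_top (measurable_betaIntegrand hfm).aestronglyMeasurable 1 ?_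
  filter_upwards [ae_restrict_mem measurableSet_Ioc] with w hw
  exact norm_betaIntegrand_le_one hf (Ioc_subset_Ioc_left hs hw)

lemma betaStep_mono (hfm : Measurable f) (hgm : Measurable g)
    (hf : ∀ t ∈ Icc (0:ℝ) 1, f t ∈ Icc 0 (1 - t)) (hg : ∀ t ∈ Icc (0:ℝ) 1, g t ∈ Icc 0 (1 - t))
    (hfg : ∀ t ∈ Icc (0:ℝ) 1, f t ≤ g t) (hs : 0 ≤ s) : betaStep f s ≤ betaStep g s := by
  refine setIntegral_mono_on (integrableOn_betaIntegrand hfm hf hs)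
    (integrableOn_betaIntegrand hgm hg hs) measurableSet_Ioc fun w hw => ?_
  have hw₀ : 0 < w := hs.trans_lt hw.1
  have hfg_w : f (1 - w) ≤ g (1 - w) := hfg (1 - w) ⟨by linarith [hw.2], by linarith⟩
  gcongr

lemma tendsto_betaStep {F : ℕ → ℝ → ℝ} (hFm : ∀ n, Measurable (F n))
    (hF : ∀ n, ∀ t ∈ Icc (0:ℝ) 1, F n t ∈ Icc 0 (1 - t))
    (hlim : ∀ t ∈ Icc (0:ℝ) 1, Tendsto (fun n => F n t) atTop (nhds (g t))) (hs : 0 ≤ s) :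
    Tendsto (fun n => betaStep (F n) s) atTop (nhds (betaStep g s)) := by
  refine tendsto_integral_of_dominated_convergence (fun _ => 1)
    (fun n => (measurable_betaIntegrand (hFm n)).aestronglyMeasurable)
    (integrableOn_const measure_Ioc_lt_top.ne) (fun n => ?_) ?_
  all_goals filter_upwards [ae_restrict_mem measurableSet_Ioc] with w hw
  · exact norm_betaIntegrand_le_one (hF n) (Ioc_subset_Ioc_left hs hw)
  · have hF_w := hlim (1 - w) ⟨by linarith [hw.2], by linarith [hw.1]⟩
    exact ((continuous_exp.tendsto _).comp hF_w.neg).const_sub 1 |>.const_mul _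

end betaStep

lemma measurable_beta (n : ℕ) : Measurable (beta n) := by
  induction n with
  | zero => exact measurable_const.sub measurable_id
  | succ n ih => exact measurable_betaStep ih

lemma beta_mem_Icc (n : ℕ) : ∀ t ∈ Icc (0:ℝ) 1, beta n t ∈ Icc 0 (1 - t) := by
  induction n with
  | zero => exact fun t ht => ⟨sub_nonneg.2 ht.2, le_rfl⟩
  | succ n ih => exact fun t ht => betaStep_mem_Icc ih ht

lemma beta_succ_le (n : ℕ) {s : ℝ} (hs : s ∈ Icc (0:ℝ) 1) : beta (n + 1) s ≤ beta n s := by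
  induction n generalizing s with
  | zero => exact (beta_mem_Icc 1 s hs).2
  | succ n ih =>
    exact betaStep_mono (measurable_beta _) (measurable_beta _) (beta_mem_Icc _) (beta_mem_Icc _)
      (fun t ht => ih ht) hs.1

noncomputable def betaLimit (s : ℝ) : ℝ := ⨅ n, beta n s

lemma tendsto_beta_betaLimit {s : ℝ} (hs : s ∈ Icc (0:ℝ) 1) :
    Tendsto (fun n => beta n s) atTop (nhds (betaLimit s)) :=
  tendsto_atTop_ciInf (antitone_nat_of_succ_le fun n => beta_succ_le n hs)
    ⟨0, forall_mem_range.2 fun n => (beta_mem_Icc n s hs).1⟩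

lemma betaLimit_mem_Icc {s : ℝ} (hs : s ∈ Icc (0:ℝ) 1) : betaLimit s ∈ Icc 0 (1 - s) :=
  isClosed_Icc.mem_of_tendsto (tendsto_beta_betaLimit hs) (.of_forall fun n => beta_mem_Icc n s hs)

lemma betaStep_betaLimit {s : ℝ} (hs : s ∈ Icc (0:ℝ) 1) : betaLimit s = betaStep betaLimit s :=
  tendsto_nhds_unique ((tendsto_beta_betaLimit hs).comp (tendsto_add_atTop_nat 1))
    (tendsto_betaStep measurable_beta beta_mem_Icc (fun _ ht => tendsto_beta_betaLimit ht) hs.1)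

/-- There exists `L : [0,1] → [0,1]` with `L(1) = 0` such that
`L(s) = lim_n β_n(s)` for all `s ∈ [0,1]`, and `L` satisfies
`L(s) = ∫_s^1 (1/w)(1 − e^{−L(1−w)}) dw` for all `s ∈ [0,1)`. -/
theorem stmt9 :
    ∃ L : ℝ → ℝ, (∀ s ∈ Set.Icc (0:ℝ) 1, L s ∈ Set.Icc (0:ℝ) 1) ∧ L 1 = 0 ∧
      (∀ s ∈ Set.Icc (0:ℝ) 1,
        Filter.Tendsto (fun n => beta n s) Filter.atTop (nhds (L s))) ∧
      (∀ s ∈ Set.Ico (0:ℝ) 1,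
        L s = ∫ w in Set.Ioc s 1, (1 / w) * (1 - Real.exp (-(L (1 - w))))) := by
  refine ⟨betaLimit, fun s hs => ?_, ?_, fun s hs => tendsto_beta_betaLimit hs,
    fun s hs => betaStep_betaLimit (Ico_subset_Icc_self hs)⟩
  · exact Icc_subset_Icc le_rfl (by linarith [hs.1]) (betaLimit_mem_Icc hs)
  · have h := betaLimit_mem_Icc (s := 1) ⟨zero_le_one, le_rfl⟩
    rw [sub_self] at h
    exact le_antisymm h.2 h.1
end

section
/- Let X and Y be real-valued random variables on a common probability space, each having the Logistic distribution, and suppose their joint survival function G(x,y) := P(X > x, Y > y) satisfies G(x,y) = H̄(x)·H̄(y)·exp(∫_0^{∞} G(t−x, t−y) dt) for all x, y ∈ ℝ. Then X = Y almost surely. -/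
open MeasureTheory Real Set Filter

/-- The Logistic distribution function `H(x) = 1/(1+e^{-x})`. -/
noncomputable def H (x : ℝ) : ℝ := 1 / (1 + Real.exp (-x))

/-- The tail `H̄ := 1 - H` of the Logistic distribution function. -/
noncomputable def Hbar (x : ℝ) : ℝ := 1 - H x

/-- The set 𝔉 of continuous, non-increasing functions `f : ℝ → [0,1]`
with `H̄(x)² ≤ f(x) ≤ H̄(x)` for all `x`. -/
def memF (f : ℝ → ℝ) : Prop :=
  (∀ x, f x ∈ Set.Icc (0:ℝ) 1) ∧ Continuous f ∧ Antitone f ∧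
    ∀ x, Hbar x ^ 2 ≤ f x ∧ f x ≤ Hbar x

/-- The operator `T(f)(x) := H̄(x)² · exp(∫_{-x}^∞ f(s) ds)`. -/
noncomputable def T (f : ℝ → ℝ) (x : ℝ) : ℝ :=
  Hbar x ^ 2 * Real.exp (∫ s in Set.Ioi (-x), f s)

/-!
Put `f x := G x x`. The hypothesis says exactly that `f` is a fixed point of `T`, and
`0 ≤ f ≤ H̄`. Since `∫_{-x}^∞ H̄ = -log H̄(x)`, a fixed point is `f = H̄ · e^{-W}` with
`W(x) = ∫_{-x}^∞ (H̄ - f) ≥ 0`, so that `H̄ - f = H̄ (1 - e^{-W})`. This gives `W ≤ H`, and a bound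
`W ≤ c H` improves to `W ≤ (c - c²/8) H`: the integrand is at most `H H̄ · k` with
`k = (1 - e^{-cH}) / H` decreasing, so Chebyshev's association inequality for the logistic density
`H H̄` bounds `∫_{-x}^∞ H H̄ k` by `H(x) ∫ H H̄ k`, and `1 - e^{-t} ≤ t - t²/4` bounds `∫ H H̄ k`
by `c - c²/8`. For `c = sup W / H` this forces `c = 0`, hence `f = H̄`:
`P(X > x, Y > x) = P(X > x) = P(Y > x)` for every `x`, which makes `X = Y` almost surely.
-/

open Topology Function

lemma integrable_deriv_of_nonneg {g g' : ℝ → ℝ} {l l' : ℝ} (hderiv : ∀ x, HasDerivAt g (g' x) x)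
    (hg' : ∀ x, 0 ≤ g' x) (hbot : Tendsto g atBot (𝓝 l)) (htop : Tendsto g atTop (𝓝 l')) :
    Integrable g' := by
  have hIoi : IntegrableOn g' (Ioi 0) :=
    integrableOn_Ioi_deriv_of_nonneg' (fun x _ => hderiv x) (fun x _ => hg' x) htop
  have hIio : IntegrableOn g' (Iio 0) := by
    have hreflected : IntegrableOn (fun x => g' (-x)) (Ioi (-0)) :=
      integrableOn_Ioi_deriv_of_nonneg' (g := fun x => -g (-x))
        (fun x _ => ((hderiv (-x)).comp x (hasDerivAt_neg x)).neg.congr_deriv (by simp))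
        (fun x _ => hg' _) (hbot.comp tendsto_neg_atTop_atBot).neg
    simpa using hreflected.comp_neg_Iio
  rw [← integrableOn_univ, ← Iio_union_Ici (a := 0)]
  exact hIio.union ((integrableOn_Ici_iff_integrableOn_Ioi).2 hIoi)

lemma integral_mul_setIntegral_Ioi_le_of_antitone {ρ k : ℝ → ℝ} (hρ0 : ∀ x, 0 ≤ ρ x)
    (hρ : Integrable ρ) (hk : Antitone k) (hρk : Integrable fun x => ρ x * k x) (y : ℝ) :
    (∫ x, ρ x) * ∫ x in Ioi y, ρ x * k x ≤ (∫ x in Ioi y, ρ x) * ∫ x, ρ x * k x := by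
  set A := ∫ x in Iic y, ρ x
  set B := ∫ x in Ioi y, ρ x
  set I := ∫ x in Iic y, ρ x * k x
  set J := ∫ x in Ioi y, ρ x * k x
  have hA : 0 ≤ A := setIntegral_nonneg measurableSet_Iic fun x _ => hρ0 x
  have hB : 0 ≤ B := setIntegral_nonneg measurableSet_Ioi fun x _ => hρ0 x
  have hJ : J ≤ B * k y := by
    rw [← integral_mul_const]
    exact setIntegral_mono_on hρk.integrableOn (hρ.integrableOn.mul_const _) measurableSet_Ioi
      fun x hx => mul_le_mul_of_nonneg_left (hk (le_of_lt hx)) (hρ0 x)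
  have hI : A * k y ≤ I := by
    rw [← integral_mul_const]
    exact setIntegral_mono_on (hρ.integrableOn.mul_const _) hρk.integrableOn measurableSet_Iic
      fun x hx => mul_le_mul_of_nonneg_left (hk hx) (hρ0 x)
  rw [← intervalIntegral.integral_Iic_add_Ioi hρ.integrableOn hρ.integrableOn (b := y),
    ← intervalIntegral.integral_Iic_add_Ioi hρk.integrableOn hρk.integrableOn (b := y)]
  nlinarith [mul_le_mul_of_nonneg_left hJ hA, mul_le_mul_of_nonneg_left hI hB]

lemma setIntegral_Ioi_comp_sub_right (f : ℝ → ℝ) (a x : ℝ) :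
    ∫ t in Ioi a, f (t - x) = ∫ s in Ioi (a - x), f s := by
  simpa using (measurePreserving_sub_right volume x).setIntegral_preimage_emb
    (measurableEmbedding_subRight x) f (Ioi (a - x))

lemma antitoneOn_one_sub_exp_neg_mul_div (c : ℝ) :
    AntitoneOn (fun t => (1 - exp (-(c * t))) / t) (Ioi 0) := by
  have hconv : ConvexOn ℝ univ fun t => exp (-(c * t)) := by
    simpa [comp_def] using convexOn_exp.comp_linearMap (LinearMap.lsmul ℝ ℝ (-c))
  intro s hs t ht hst
  have := hconv.secant_mono (a := 0) (mem_univ _) (mem_univ s) (mem_univ t) (ne_of_gt hs)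
    (ne_of_gt ht) hst
  simp only [mul_zero, neg_zero, exp_zero, sub_zero] at this
  have hneg (u : ℝ) : (1 - exp (-(c * u))) / u = -((exp (-(c * u)) - 1) / u) := by ring
  simp only [hneg]
  exact neg_le_neg this

lemma one_sub_exp_neg_le {t : ℝ} (ht : t ≤ 2) : 1 - exp (-t) ≤ t - t ^ 2 / 4 := by
  have h : (1 - t / 2) ^ 2 ≤ exp (-(t / 2)) ^ 2 :=
    pow_le_pow_left₀ (by linarith) (by linarith [add_one_le_exp (-(t / 2))]) 2
  rw [← exp_nat_mul, show ((2 : ℕ) : ℝ) * -(t / 2) = -t by push_cast; ring] at h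
  nlinarith

lemma eq_zero_of_le_mul_imp_le_sub_sq_mul {W h : ℝ → ℝ} {δ : ℝ} (hδ : 0 < δ)
    (hh : ∀ x, 0 < h x) (hW0 : ∀ x, 0 ≤ W x) (hWh : ∀ x, W x ≤ h x)
    (hstep : ∀ c, 0 ≤ c → c ≤ 1 → (∀ x, W x ≤ c * h x) → ∀ x, W x ≤ (c - δ * c ^ 2) * h x) :
    W = 0 := by
  have hbdd : BddAbove (range fun x => W x / h x) :=
    ⟨1, by rintro _ ⟨x, rfl⟩; exact (div_le_one (hh x)).2 (hWh x)⟩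
  set M := ⨆ x, W x / h x
  have hWM (x : ℝ) : W x ≤ M * h x := (div_le_iff₀ (hh x)).1 (le_ciSup hbdd x)
  have hM0 : 0 ≤ M := (div_nonneg (hW0 0) (hh 0).le).trans (le_ciSup hbdd 0)
  have hM1 : M ≤ 1 := ciSup_le fun x => (div_le_one (hh x)).2 (hWh x)
  have hMM : M ≤ M - δ * M ^ 2 :=
    ciSup_le fun x => (div_le_iff₀ (hh x)).2 (hstep M hM0 hM1 hWM x)
  have hM : M = 0 := by
    by_contra hne
    linarith [mul_pos hδ (pow_pos (lt_of_le_of_ne hM0 (Ne.symm hne)) 2)]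
  funext x
  exact le_antisymm (by simpa [hM] using hWM x) (hW0 x)

lemma H_eq_sigmoid : H = sigmoid := funext fun _ => one_div _

lemma H_pos (x : ℝ) : 0 < H x := H_eq_sigmoid ▸ sigmoid_pos x

lemma H_lt_one (x : ℝ) : H x < 1 := H_eq_sigmoid ▸ sigmoid_lt_one x

lemma Hbar_pos (x : ℝ) : 0 < Hbar x := sub_pos.2 (H_lt_one x)

lemma H_neg (x : ℝ) : H (-x) = Hbar x := by
  rw [Hbar, H_eq_sigmoid, sigmoid_neg]

lemma Hbar_neg (x : ℝ) : Hbar (-x) = H x := by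
  rw [← H_neg, neg_neg]

lemma monotone_H : Monotone H := H_eq_sigmoid ▸ sigmoid_monotone

@[fun_prop]
lemma continuous_H : Continuous H := H_eq_sigmoid ▸ continuous_sigmoid

@[fun_prop]
lemma continuous_Hbar : Continuous Hbar := continuous_const.sub continuous_H

lemma hasDerivAt_H (x : ℝ) : HasDerivAt H (H x * Hbar x) x := by
  simpa only [Hbar, H_eq_sigmoid] using hasDerivAt_sigmoid x

lemma tendsto_H_atTop : Tendsto H atTop (𝓝 1) := H_eq_sigmoid ▸ tendsto_sigmoid_atTop

lemma tendsto_H_atBot : Tendsto H atBot (𝓝 0) := H_eq_sigmoid ▸ tendsto_sigmoid_atBot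

lemma integrable_H_mul_Hbar : Integrable fun x => H x * Hbar x :=
  integrable_deriv_of_nonneg hasDerivAt_H (fun x => (mul_pos (H_pos x) (Hbar_pos x)).le)
    tendsto_H_atBot tendsto_H_atTop

lemma integral_H_mul_Hbar : ∫ x, H x * Hbar x = 1 := by
  simpa using integral_of_hasDerivAt_of_tendsto hasDerivAt_H integrable_H_mul_Hbar
    tendsto_H_atBot tendsto_H_atTop

lemma setIntegral_Ioi_H_mul_Hbar (y : ℝ) : ∫ x in Ioi y, H x * Hbar x = Hbar y :=
  integral_Ioi_of_hasDerivAt_of_nonneg' (fun x _ => hasDerivAt_H x)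
    (fun x _ => (mul_pos (H_pos x) (Hbar_pos x)).le) tendsto_H_atTop

lemma hasDerivAt_H_sq_div_two (x : ℝ) :
    HasDerivAt (fun y => H y ^ 2 / 2) (H x ^ 2 * Hbar x) x :=
  (((hasDerivAt_H x).pow 2).div_const 2).congr_deriv (by ring)

lemma tendsto_H_sq_div_two_atBot : Tendsto (fun y => H y ^ 2 / 2) atBot (𝓝 0) := by
  simpa using (tendsto_H_atBot.pow 2).div_const 2

lemma tendsto_H_sq_div_two_atTop : Tendsto (fun y => H y ^ 2 / 2) atTop (𝓝 (1 / 2)) := by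
  simpa using (tendsto_H_atTop.pow 2).div_const 2

lemma integrable_H_sq_mul_Hbar : Integrable fun x => H x ^ 2 * Hbar x :=
  integrable_deriv_of_nonneg hasDerivAt_H_sq_div_two
    (fun x => mul_nonneg (sq_nonneg _) (Hbar_pos x).le) tendsto_H_sq_div_two_atBot
    tendsto_H_sq_div_two_atTop

lemma integral_H_sq_mul_Hbar : ∫ x, H x ^ 2 * Hbar x = 1 / 2 := by
  simpa using integral_of_hasDerivAt_of_tendsto hasDerivAt_H_sq_div_two integrable_H_sq_mul_Hbar
    tendsto_H_sq_div_two_atBot tendsto_H_sq_div_two_atTop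

lemma hasDerivAt_log_H (x : ℝ) : HasDerivAt (fun y => log (H y)) (Hbar x) x :=
  ((hasDerivAt_H x).log (H_pos x).ne').congr_deriv (by field_simp [(H_pos x).ne'])

lemma tendsto_log_H_atTop : Tendsto (fun y => log (H y)) atTop (𝓝 0) := by
  simpa [comp_def] using (continuousAt_log one_ne_zero).tendsto.comp tendsto_H_atTop

lemma integrableOn_Ioi_Hbar (y : ℝ) : IntegrableOn Hbar (Ioi y) :=
  integrableOn_Ioi_deriv_of_nonneg' (fun x _ => hasDerivAt_log_H x) (fun x _ => (Hbar_pos x).le)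
    tendsto_log_H_atTop

lemma setIntegral_Ioi_Hbar (y : ℝ) : ∫ x in Ioi y, Hbar x = -log (H y) := by
  rw [integral_Ioi_of_hasDerivAt_of_nonneg' (fun x _ => hasDerivAt_log_H x)
    (fun x _ => (Hbar_pos x).le) tendsto_log_H_atTop, zero_sub]

lemma integrable_Hbar_mul_one_sub_exp {c : ℝ} (hc : 0 ≤ c) :
    Integrable fun x => Hbar x * (1 - exp (-(c * H x))) := by
  refine (integrable_H_mul_Hbar.const_mul c).mono' (by fun_prop) (ae_of_all _ fun x => ?_)
  have h1 : 0 ≤ 1 - exp (-(c * H x)) := by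
    simpa using exp_le_one_iff.2 (neg_nonpos.2 (mul_nonneg hc (H_pos x).le))
  have h2 : 1 - exp (-(c * H x)) ≤ c * H x := by linarith [add_one_le_exp (-(c * H x))]
  rw [norm_of_nonneg (mul_nonneg (Hbar_pos x).le h1)]
  nlinarith [Hbar_pos x]

lemma integral_Hbar_mul_one_sub_exp_le {c : ℝ} (hc0 : 0 ≤ c) (hc2 : c ≤ 2) :
    ∫ x, Hbar x * (1 - exp (-(c * H x))) ≤ c - c ^ 2 / 8 := by
  have hpt (x : ℝ) : Hbar x * (1 - exp (-(c * H x))) ≤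
      c * (H x * Hbar x) - c ^ 2 / 4 * (H x ^ 2 * Hbar x) := by
    have hcH : c * H x ≤ 2 := by nlinarith [H_pos x, H_lt_one x]
    nlinarith [one_sub_exp_neg_le hcH, Hbar_pos x]
  have hint : Integrable fun x => c * (H x * Hbar x) - c ^ 2 / 4 * (H x ^ 2 * Hbar x) :=
    (integrable_H_mul_Hbar.const_mul c).sub (integrable_H_sq_mul_Hbar.const_mul _)
  calc ∫ x, Hbar x * (1 - exp (-(c * H x)))
      ≤ ∫ x, c * (H x * Hbar x) - c ^ 2 / 4 * (H x ^ 2 * Hbar x) :=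
        integral_mono (integrable_Hbar_mul_one_sub_exp hc0) hint hpt
    _ = c - c ^ 2 / 8 := by
        rw [integral_sub (integrable_H_mul_Hbar.const_mul c) (integrable_H_sq_mul_Hbar.const_mul _),
          integral_const_mul, integral_const_mul, integral_H_mul_Hbar, integral_H_sq_mul_Hbar]
        ring

lemma setIntegral_Ioi_Hbar_mul_one_sub_exp_le {c : ℝ} (hc0 : 0 ≤ c) (hc2 : c ≤ 2) (y : ℝ) :
    ∫ x in Ioi y, Hbar x * (1 - exp (-(c * H x))) ≤ (c - c ^ 2 / 8) * Hbar y := by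
  set k : ℝ → ℝ := fun x => (1 - exp (-(c * H x))) / H x
  have hk : Antitone k := fun s t hst =>
    antitoneOn_one_sub_exp_neg_mul_div c (H_pos s) (H_pos t) (monotone_H hst)
  have hρk (x : ℝ) : H x * Hbar x * k x = Hbar x * (1 - exp (-(c * H x))) := by
    simp only [k]
    field_simp [(H_pos x).ne']
  have hcheb := integral_mul_setIntegral_Ioi_le_of_antitone
    (fun x => (mul_pos (H_pos x) (Hbar_pos x)).le) integrable_H_mul_Hbar hk
    (by simpa only [hρk] using integrable_Hbar_mul_one_sub_exp hc0) y
  simp only [hρk, integral_H_mul_Hbar, setIntegral_Ioi_H_mul_Hbar, one_mul] at hcheb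
  calc _ ≤ Hbar y * ∫ x, Hbar x * (1 - exp (-(c * H x))) := hcheb
    _ ≤ Hbar y * (c - c ^ 2 / 8) :=
        mul_le_mul_of_nonneg_left (integral_Hbar_mul_one_sub_exp_le hc0 hc2) (Hbar_pos y).le
    _ = (c - c ^ 2 / 8) * Hbar y := mul_comm _ _

noncomputable def tailDeficit (f : ℝ → ℝ) (x : ℝ) : ℝ := ∫ s in Ioi (-x), (Hbar s - f s)

lemma T_eq_Hbar_mul_exp_neg_tailDeficit {f : ℝ → ℝ} {x : ℝ} (hf : IntegrableOn f (Ioi (-x))) :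
    T f x = Hbar x * exp (-tailDeficit f x) := by
  have hint : ∫ s in Ioi (-x), f s = -log (Hbar x) - tailDeficit f x := by
    rw [tailDeficit, integral_sub (integrableOn_Ioi_Hbar _) hf, setIntegral_Ioi_Hbar, H_neg]
    ring
  rw [T, hint, exp_sub, exp_neg, exp_log (Hbar_pos x), exp_neg]
  field_simp [(Hbar_pos x).ne']

theorem eq_Hbar_of_isFixedPt_T {f : ℝ → ℝ} (hfm : Measurable f) (hf0 : ∀ x, 0 ≤ f x)
    (hfH : ∀ x, f x ≤ Hbar x) (hT : IsFixedPt T f) : f = Hbar := by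
  set W := tailDeficit f
  have hfint (y : ℝ) : IntegrableOn f (Ioi y) :=
    (integrableOn_Ioi_Hbar y).mono' hfm.aestronglyMeasurable
      (ae_of_all _ fun x => by simpa [abs_of_nonneg (hf0 x)] using hfH x)
  have hf (x : ℝ) : f x = Hbar x * exp (-W x) := by
    rw [← T_eq_Hbar_mul_exp_neg_tailDeficit (hfint _), hT.eq]
  have hW_le {x : ℝ} {φ : ℝ → ℝ} (hφ : IntegrableOn φ (Ioi (-x)))
      (hle : ∀ s, Hbar s * (1 - exp (-W s)) ≤ φ s) : W x ≤ ∫ s in Ioi (-x), φ s :=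
    setIntegral_mono_on ((integrableOn_Ioi_Hbar _).sub (hfint _)) hφ measurableSet_Ioi
      fun s _ => by simpa [hf s, mul_sub] using hle s
  have hW0 (x : ℝ) : 0 ≤ W x :=
    setIntegral_nonneg measurableSet_Ioi fun s _ => sub_nonneg.2 (hfH s)
  have hf_ge (s : ℝ) : Hbar s ^ 2 ≤ f s :=
    (le_mul_of_one_le_right (sq_nonneg _)
      (one_le_exp (setIntegral_nonneg measurableSet_Ioi fun t _ => hf0 t))).trans_eq (congrFun hT s)
  have hWH (x : ℝ) : W x ≤ H x := by
    refine (hW_le integrable_H_mul_Hbar.integrableOn fun s => ?_).trans_eq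
      (by rw [setIntegral_Ioi_H_mul_Hbar, Hbar_neg])
    have hH : H s = 1 - Hbar s := by simp [Hbar]
    have hexp := hf_ge s
    rw [hf s] at hexp
    rw [hH]
    linarith
  have hstep (c : ℝ) (hc0 : 0 ≤ c) (hc1 : c ≤ 1) (hc : ∀ x, W x ≤ c * H x) (x : ℝ) :
      W x ≤ (c - 1 / 8 * c ^ 2) * H x := by
    refine (hW_le (integrable_Hbar_mul_one_sub_exp hc0).integrableOn fun s => ?_).trans
      ((setIntegral_Ioi_Hbar_mul_one_sub_exp_le hc0 (by linarith) (-x)).trans_eq ?_)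
    · exact mul_le_mul_of_nonneg_left (by linarith [exp_le_exp.2 (neg_le_neg (hc s))])
        (Hbar_pos s).le
    · rw [Hbar_neg]
      ring
  have hW : W = 0 := eq_zero_of_le_mul_imp_le_sub_sq_mul (by norm_num) H_pos hW0 hWH hstep
  funext x
  simp [hf x, hW]

section Probability

variable {Ω : Type*} [MeasurableSpace Ω] {P : Measure Ω}

lemma ae_le_of_forall_measure_lt_le [IsFiniteMeasure P] {X Y : Ω → ℝ} (hY : Measurable Y)
    (h : ∀ x : ℝ, P {ω | x < X ω} ≤ P {ω | x < X ω ∧ x < Y ω}) : X ≤ᵐ[P] Y := by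
  have hnull (q : ℚ) : P ({ω | (q : ℝ) < X ω} \ {ω | (q : ℝ) < Y ω}) = 0 := by
    have hsplit := measure_inter_add_sdiff (μ := P) {ω | (q : ℝ) < X ω}
      (measurableSet_lt (measurable_const (a := (q : ℝ))) hY)
    refine nonpos_iff_eq_zero.1 (ENNReal.le_of_add_le_add_left (measure_ne_top P
      ({ω | (q : ℝ) < X ω} ∩ {ω | (q : ℝ) < Y ω})) ?_)
    rw [hsplit, add_zero]
    exact h q
  rw [EventuallyLE, ae_iff]
  refine measure_mono_null (fun ω hω => ?_) (measure_iUnion_null hnull)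
  obtain ⟨q, hYq, hqX⟩ := exists_rat_btwn (not_le.1 hω)
  exact mem_iUnion.2 ⟨q, hqX, not_lt.2 hYq.le⟩

lemma toReal_measure_lt_eq_Hbar [IsProbabilityMeasure P] {X : Ω → ℝ} (hX : Measurable X)
    (hXlog : ∀ x, (P {ω | X ω ≤ x}).toReal = H x) (x : ℝ) :
    (P {ω | x < X ω}).toReal = Hbar x := by
  have hcompl : {ω | x < X ω} = {ω | X ω ≤ x}ᶜ := by ext; simp
  rw [hcompl, prob_compl_eq_one_sub (measurableSet_le hX measurable_const),
    ENNReal.toReal_sub_of_le prob_le_one ENNReal.one_ne_top, ENNReal.toReal_one, hXlog, Hbar]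

end Probability

/-- Let `X` and `Y` be real random variables on a common
probability space, each with the Logistic distribution, whose joint survival
function `G(x,y) := P(X > x, Y > y)` satisfies
`G(x,y) = H̄(x)·H̄(y)·exp(∫_0^∞ G(t−x, t−y) dt)` for all `x, y`. Then `X = Y`
almost surely. -/
theorem stmt16 {Ω : Type*} [MeasurableSpace Ω] (P : Measure Ω)
    [IsProbabilityMeasure P] (X Y : Ω → ℝ) (hX : Measurable X) (hY : Measurable Y)
    (hXlog : ∀ x, (P {ω | X ω ≤ x}).toReal = H x)
    (hYlog : ∀ x, (P {ω | Y ω ≤ x}).toReal = H x)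
    (G : ℝ → ℝ → ℝ)
    (hG : ∀ x y, G x y = (P {ω | x < X ω ∧ y < Y ω}).toReal)
    (heq : ∀ x y, G x y =
      Hbar x * Hbar y * Real.exp (∫ t in Set.Ioi (0:ℝ), G (t - x) (t - y))) :
    X =ᵐ[P] Y := by
  set f : ℝ → ℝ := fun x => G x x
  have hf_anti : Antitone f := fun a b hab => by
    simp only [f, hG]
    exact ENNReal.toReal_mono (measure_ne_top _ _)
      (measure_mono fun ω hω => ⟨hab.trans_lt hω.1, hab.trans_lt hω.2⟩)
  have hfH (x : ℝ) : f x ≤ Hbar x := by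
    simp only [f, hG, ← toReal_measure_lt_eq_Hbar hX hXlog x]
    exact ENNReal.toReal_mono (measure_ne_top _ _) (measure_mono fun ω hω => hω.1)
  have hT : IsFixedPt T f := funext fun x => by
    simp only [T, f]
    rw [heq x x, setIntegral_Ioi_comp_sub_right (fun s => G s s), zero_sub]
    ring
  have hf := eq_Hbar_of_isFixedPt_T hf_anti.measurable (fun x => by simp [f, hG]) hfH hT
  have hboth (x : ℝ) : (P {ω | x < X ω ∧ x < Y ω}).toReal = Hbar x :=
    (hG x x).symm.trans (congrFun hf x)
  refine (ae_le_of_forall_measure_lt_le hY fun x => ?_).antisymm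
    (ae_le_of_forall_measure_lt_le hX fun x => ?_)
  · rw [← ENNReal.toReal_le_toReal (measure_ne_top _ _) (measure_ne_top _ _), hboth,
      toReal_measure_lt_eq_Hbar hX hXlog]
  · simp_rw [and_comm (a := x < Y _)]
    rw [← ENNReal.toReal_le_toReal (measure_ne_top _ _) (measure_ne_top _ _), hboth,
      toReal_measure_lt_eq_Hbar hY hYlog]
end
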